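/- Let p be prime, H a subgroup of (ℤ/pℤ)*, δ > 0, and suppose max_{a ∈ (ℤ/pℤ)*} |∑_{h∈H} e(ah/p)| ≤ C·|H|/p^{3δ} for some constant C. Let N = ⌊p^{1-δ}⌋ and x₀ ∈ (ℤ/pℤ)*. Then the number of pairs (h, x) with h ∈ H, 1 ≤ |x| ≤ N, x₀h ≡ x (mod p) is at least 2|H|/p^δ - C'·|H| log p / p^{3δ} for an absolute constant C' depending on C; in particular, if |H| ≥ 1 and p is large enough (in terms of δ and C), there exists h ∈ H and an integer x with 1 ≤ |x| ≤ p^{1-δ} and x₀h ≡ x (mod p). -/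

import Mathlib

open scoped Classical

/-- `e(t) = exp(2πit)`. -/
noncomputable def e (t : ℝ) : ℂ := Complex.exp (2 * Real.pi * Complex.I * t)

set_option linter.unusedSectionVars false
set_option linter.unusedVariables false

lemma e_add (s t : ℝ) : e (s + t) = e s * e t := by
  simp [e, ← Complex.exp_add]; ring_nf

lemma e_zero : e 0 = 1 := by simp [e]

lemma e_int (n : ℤ) : e n = 1 := by
  rw [e, show 2 * (Real.pi:ℂ) * Complex.I * (n:ℝ) = (n:ℂ) * (2 * Real.pi * Complex.I) by push_cast; ring]
  exact Complex.exp_int_mul_two_pi_mul_I n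

lemma e_per (t : ℝ) (n : ℤ) : e (t + n) = e t := by
  rw [e_add, e_int, mul_one]

lemma e_abs (t : ℝ) : ‖e t‖ = 1 := by
  rw [e, Complex.norm_exp]
  simp [mul_comm, mul_assoc]

lemma e_conj (t : ℝ) : (starRingEnd ℂ) (e t) = e (-t) := by
  rw [e, e, ← Complex.exp_conj]
  congr 1
  simp only [map_mul, Complex.conj_I, Complex.conj_ofReal, map_ofNat]
  push_cast
  ring

lemma e_nat_pow (t : ℝ) (n : ℕ) : e (n * t) = (e t) ^ n := by
  rw [e, e, ← Complex.exp_nat_mul]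
  congr 1
  push_cast; ring

noncomputable def psi (p : ℕ) (z : ZMod p) : ℂ := e ((z.val : ℝ) / p)

section psi
variable {p : ℕ} [NeZero p]

lemma e_div_congr {m m' : ℤ} (h : ((m : ZMod p)) = (m' : ZMod p)) :
    e ((m : ℝ) / p) = e ((m' : ℝ) / p) := by
  have hp : (p : ℝ) ≠ 0 := Nat.cast_ne_zero.mpr (NeZero.ne p)
  rw [ZMod.intCast_eq_intCast_iff] at h
  obtain ⟨k, hk⟩ := (Int.ModEq.dvd h)
  have : (m : ℝ) / p = (m' : ℝ) / p + (-k : ℤ) := by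
    have : (m' : ℝ) - m = p * k := by exact_mod_cast congrArg Int.cast hk
    push_cast
    field_simp
    linarith
  rw [this, e_per]

lemma psi_intCast (m : ℤ) : psi p ((m : ZMod p)) = e ((m : ℝ) / p) := by
  have h : (((((m : ZMod p)).val : ℤ)) : ZMod p) = (m : ZMod p) := by
    push_cast [ZMod.natCast_val]
    rfl
  have := e_div_congr (p := p) h
  rw [psi, show (((m : ZMod p)).val : ℝ) = ((((m : ZMod p)).val : ℤ) : ℝ) by push_cast; rfl]
  exact this

lemma psi_add (y z : ZMod p) : psi p (y + z) = psi p y * psi p z := by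
  have h : ((((y.val : ℤ) + (z.val : ℤ)) : ℤ) : ZMod p) = ((y + z : ZMod p)) := by
    push_cast [ZMod.natCast_val]
    rfl
  have h2 : psi p (y + z) = e (((y.val : ℤ) + (z.val : ℤ) : ℝ) / p) := by
    have := psi_intCast (p := p) ((y.val : ℤ) + (z.val : ℤ))
    rw [h] at this
    rw [this]
    norm_num
  rw [h2, show (((y.val : ℤ) + (z.val : ℤ) : ℝ)) / p = (y.val : ℝ)/p + (z.val : ℝ)/p by push_cast; ring, e_add]
  rfl

lemma psi_zero : psi p 0 = 1 := by
  simp [psi, ZMod.val_zero, e_zero]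

lemma psi_conj (z : ZMod p) : (starRingEnd ℂ) (psi p z) = psi p (-z) := by
  rw [psi, e_conj]
  have h : (((-(z.val : ℤ)) : ℤ) : ZMod p) = ((-z : ZMod p)) := by
    push_cast [ZMod.natCast_val]
    rfl
  have := psi_intCast (p := p) (-(z.val : ℤ))
  rw [h] at this
  rw [this]
  congr 1
  push_cast
  ring

lemma psi_abs (z : ZMod p) : ‖psi p z‖ = 1 := e_abs _

lemma psi_mul_natCast (b : ZMod p) (k : ℕ) : psi p (b * (k : ZMod p)) = psi p b ^ k := by
  have h : ((((b.val * k : ℕ) : ℤ)) : ZMod p) = b * (k : ZMod p) := by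
    push_cast [ZMod.natCast_val]
    rfl
  have := psi_intCast (p := p) ((b.val * k : ℕ) : ℤ)
  rw [h] at this
  rw [this, show (((b.val * k : ℕ) : ℤ) : ℝ) / p = (k : ℝ) * ((b.val : ℝ) / p) by push_cast; ring,
    e_nat_pow]
  rfl

lemma sum_val_reindex {M : Type*} [AddCommMonoid M] (f : ℕ → M) :
    ∑ a : ZMod p, f a.val = ∑ k ∈ Finset.range p, f k := by
  apply Finset.sum_nbij' (i := fun (a : ZMod p) => a.val) (j := fun k => (k : ZMod p))
  · intro a _; exact Finset.mem_range.mpr (ZMod.val_lt a)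
  · intro k _; exact Finset.mem_univ _
  · intro a _; exact ZMod.natCast_rightInverse a
  · intro k hk; exact ZMod.val_natCast_of_lt (Finset.mem_range.mp hk)
  · intro a _; rfl

lemma psi_ne_one {c : ZMod p} (hp : 1 < p) (hc : c ≠ 0) : psi p c ≠ 1 := by
  intro h
  rw [psi] at h
  have hpr : (0:ℝ) < p := by positivity
  have hv : 0 < c.val := Nat.pos_of_ne_zero (fun h' => hc ((ZMod.val_eq_zero c).mp h'))
  have hvp : c.val < p := ZMod.val_lt c
  rw [e, Complex.exp_eq_one_iff] at h
  obtain ⟨n, hn⟩ := h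
  have h2 : (2 * (Real.pi:ℂ) * Complex.I) ≠ 0 := by
    simp [Real.pi_ne_zero, Complex.I_ne_zero]
  have ht : (((c.val : ℝ) / p : ℝ) : ℂ) = (n : ℂ) :=
    mul_left_cancel₀ h2 (by linear_combination hn)
  have htr : (c.val : ℝ) / p = (n : ℝ) := by exact_mod_cast ht
  have h0 : (0:ℝ) < (n:ℝ) := by
    rw [← htr]; positivity
  have h1 : (n:ℝ) < 1 := by
    rw [← htr]
    rw [div_lt_one hpr]
    exact_mod_cast hvp
  have h0' : (0:ℤ) < n := by exact_mod_cast h0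
  have h1' : (n:ℤ) < 1 := by exact_mod_cast h1
  omega

lemma psi_sum (hp : 1 < p) (c : ZMod p) :
    ∑ a : ZMod p, psi p (a * c) = if c = 0 then (p : ℂ) else 0 := by
  have key : ∀ a : ZMod p, psi p (a * c) = psi p c ^ a.val := by
    intro a
    rw [← psi_mul_natCast c a.val, ZMod.natCast_rightInverse a, mul_comm]
  rw [Finset.sum_congr rfl (fun a _ => key a), sum_val_reindex (f := fun k => psi p c ^ k)]
  by_cases hc : c = 0
  · simp [hc, psi_zero]
  · rw [geom_sum_eq (psi_ne_one hp hc)]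
    have hzp : psi p c ^ p = 1 := by
      rw [← psi_mul_natCast c p, ZMod.natCast_self, mul_zero, psi_zero]
    simp [hzp, hc]

lemma sum_val_reindex' {M : Type*} [AddCommMonoid M] (f : ℕ → M) :
    ∑ a ∈ Finset.univ.erase (0 : ZMod p), f a.val = ∑ k ∈ Finset.Icc 1 (p - 1), f k := by
  apply Finset.sum_nbij' (i := fun (a : ZMod p) => a.val) (j := fun k => (k : ZMod p))
  · intro a ha
    have h0 : a ≠ 0 := (Finset.mem_erase.mp ha).1
    have : a.val ≠ 0 := fun h' => h0 ((ZMod.val_eq_zero a).mp h')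
    exact Finset.mem_Icc.mpr ⟨Nat.one_le_iff_ne_zero.mpr this, Nat.le_sub_one_of_lt (ZMod.val_lt a)⟩
  · intro k hk
    obtain ⟨h1, h2⟩ := Finset.mem_Icc.mp hk
    have hkp : k < p := lt_of_le_of_lt h2 (Nat.sub_lt (Nat.pos_of_ne_zero (NeZero.ne p)) one_pos)
    refine Finset.mem_erase.mpr ⟨?_, Finset.mem_univ _⟩
    intro h0
    have hval := ZMod.val_natCast_of_lt hkp
    rw [h0, ZMod.val_zero] at hval
    omega
  · intro a _; exact ZMod.natCast_rightInverse a
  · intro k hk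
    obtain ⟨h1, h2⟩ := Finset.mem_Icc.mp hk
    have hkp : k < p := lt_of_le_of_lt h2 (Nat.sub_lt (Nat.pos_of_ne_zero (NeZero.ne p)) one_pos)
    exact ZMod.val_natCast_of_lt hkp
  · intro a _; rfl

end psi


lemma geom_abs {z : ℂ} (hz : ‖z‖ = 1) (hz1 : z ≠ 1) (N : ℕ) :
    ‖∑ x ∈ Finset.Icc 1 N, z ^ x‖ ≤ 2 / ‖z - 1‖ := by
  have hd : 0 < ‖z - 1‖ := norm_pos_iff.mpr (sub_ne_zero.mpr hz1)
  have h1 : ∑ x ∈ Finset.Icc 1 N, z ^ x = (z ^ (N + 1) - z ^ 1) / (z - 1) := by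
    rw [show Finset.Icc 1 N = Finset.Ico 1 (N + 1) by rw [Finset.Ico_add_one_right_eq_Icc]]
    exact geom_sum_Ico hz1 (Nat.le_add_left 1 N)
  have hnum : ‖z ^ (N + 1) - z ^ 1‖ ≤ 2 := by
    calc ‖z ^ (N + 1) - z ^ 1‖
        ≤ ‖z ^ (N + 1)‖ + ‖z ^ 1‖ := by
          exact norm_sub_le _ _
      _ = 2 := by rw [norm_pow, norm_pow, hz]; norm_num
  rw [h1, norm_div]
  exact (div_le_div_iff_of_pos_right hd).mpr hnum

lemma e_sub_one_abs (t : ℝ) : ‖e t - 1‖ = 2 * |Real.sin (Real.pi * t)| := by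
  have h : e t = Complex.exp ((2 * Real.pi * t : ℝ) * Complex.I) := by
    rw [e]; congr 1; push_cast; ring
  have hre : (e t - 1).re = Real.cos (2 * Real.pi * t) - 1 := by
    rw [Complex.sub_re, h, Complex.exp_ofReal_mul_I_re, Complex.one_re]
  have him : (e t - 1).im = Real.sin (2 * Real.pi * t) := by
    rw [Complex.sub_im, h, Complex.exp_ofReal_mul_I_im, Complex.one_im, sub_zero]
  rw [Complex.norm_def, Complex.normSq_apply, hre, him]
  have key : (Real.cos (2 * Real.pi * t) - 1) * (Real.cos (2 * Real.pi * t) - 1) +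
      Real.sin (2 * Real.pi * t) * Real.sin (2 * Real.pi * t)
      = (2 * |Real.sin (Real.pi * t)|) ^ 2 := by
    have h2 := Real.cos_two_mul (Real.pi * t)
    have h4 : (2 : ℝ) * (Real.pi * t) = 2 * Real.pi * t := by ring
    rw [← h4, h2, Real.sin_two_mul]
    nlinarith [sq_abs (Real.sin (Real.pi * t)), Real.sin_sq_add_cos_sq (Real.pi * t)]
  rw [key, Real.sqrt_sq (by positivity)]

lemma sin_lb {u : ℝ} (h0 : 0 ≤ u) (h1 : u ≤ 1 / 2) : 2 * u ≤ Real.sin (Real.pi * u) := by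
  have hpi := Real.pi_pos
  have h2 : Real.pi * u ≤ Real.pi / 2 := by
    rw [show Real.pi / 2 = Real.pi * (1 / 2) by ring]
    exact mul_le_mul_of_nonneg_left h1 hpi.le
  have hs := Real.mul_le_sin (mul_nonneg hpi.le h0) h2
  have heq : 2 / Real.pi * (Real.pi * u) = 2 * u := by
    field_simp [Real.pi_ne_zero]
  rw [heq] at hs
  exact hs

lemma abs_e_sub_one_ge {v p : ℕ} (hv1 : 0 < v) (hv2 : v < p) :
    4 * ((min v (p - v) : ℕ) : ℝ) / p ≤ ‖e ((v : ℝ) / p) - 1‖ := by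
  have hp : (0:ℝ) < p := by
    have : 0 < p := lt_of_le_of_lt (Nat.zero_le v) hv2
    exact_mod_cast this
  have hvr : (0:ℝ) < v := by exact_mod_cast hv1
  have hvpr : (v:ℝ) < p := by exact_mod_cast hv2
  rw [e_sub_one_abs]
  rcases le_or_gt (2 * v) p with hc | hc
  · have hcr : 2 * (v:ℝ) ≤ p := by exact_mod_cast hc
    have hs : 2 * ((v:ℝ)/p) ≤ Real.sin (Real.pi * ((v:ℝ)/p)) := by
      apply sin_lb (by positivity)
      rw [div_le_div_iff₀ hp (by norm_num : (0:ℝ) < 2)]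
      linarith
    have habs : |Real.sin (Real.pi * ((v:ℝ)/p))| = Real.sin (Real.pi * ((v:ℝ)/p)) :=
      abs_of_nonneg (by nlinarith [div_pos hvr hp])
    rw [habs]
    have hm : ((min v (p - v) : ℕ) : ℝ) ≤ (v : ℝ) := by exact_mod_cast min_le_left v (p - v)
    calc 4 * ((min v (p - v) : ℕ) : ℝ) / p ≤ 4 * (v:ℝ) / p := by gcongr
      _ = 2 * (2 * ((v:ℝ)/p)) := by ring
      _ ≤ 2 * Real.sin (Real.pi * ((v:ℝ)/p)) := by linarith
  · have hcr : (p:ℝ) < 2 * v := by exact_mod_cast hc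
    set w : ℝ := ((p:ℝ) - v) with hw
    have hw0 : 0 < w := by simp [hw]; linarith
    have heq : Real.pi * ((v:ℝ)/p) = Real.pi - Real.pi * (w / p) := by
      field_simp [hw]
      ring
    have hs : 2 * (w/p) ≤ Real.sin (Real.pi * ((v:ℝ)/p)) := by
      rw [heq, Real.sin_pi_sub]
      apply sin_lb (by positivity)
      rw [div_le_div_iff₀ hp (by norm_num : (0:ℝ) < 2)]
      simp only [hw]
      linarith
    have habs : |Real.sin (Real.pi * ((v:ℝ)/p))| = Real.sin (Real.pi * ((v:ℝ)/p)) :=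
      abs_of_nonneg (by nlinarith [div_pos hw0 hp])
    rw [habs]
    have hm : ((min v (p - v) : ℕ) : ℝ) ≤ w := by
      have : ((min v (p - v) : ℕ) : ℝ) ≤ ((p - v : ℕ) : ℝ) := by
        exact_mod_cast min_le_right v (p - v)
      rw [Nat.cast_sub hv2.le] at this
      exact this
    calc 4 * ((min v (p - v) : ℕ) : ℝ) / p ≤ 4 * w / p := by gcongr
      _ = 2 * (2 * (w/p)) := by ring
      _ ≤ 2 * Real.sin (Real.pi * ((v:ℝ)/p)) := by linarith

lemma sum_inv_Icc_le (n : ℕ) : ∑ v ∈ Finset.Icc 1 n, ((v:ℝ))⁻¹ ≤ 1 + Real.log n := by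
  have h1 := harmonic_le_one_add_log n
  have h2 : ((harmonic n : ℚ) : ℝ) = ∑ v ∈ Finset.Icc 1 n, ((v:ℝ))⁻¹ := by
    rw [harmonic_eq_sum_Icc]
    push_cast
    rfl
  linarith [h2 ▸ h1]

lemma sum_reflect {M : Type*} [AddCommMonoid M] (p : ℕ) (f : ℕ → M) :
    ∑ v ∈ Finset.Icc 1 (p - 1), f (p - v) = ∑ v ∈ Finset.Icc 1 (p - 1), f v := by
  apply Finset.sum_nbij' (i := fun v => p - v) (j := fun v => p - v) <;>
    intro a ha <;> simp only [Finset.mem_Icc] at * <;> first | omega | (congr 1; omega)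

lemma sum_inv_min_le {p : ℕ} (hp : 2 ≤ p) :
    ∑ v ∈ Finset.Icc 1 (p - 1), ((min v (p - v) : ℕ) : ℝ)⁻¹ ≤ 2 * (1 + Real.log p) := by
  have step : ∀ v ∈ Finset.Icc 1 (p - 1),
      ((min v (p - v) : ℕ) : ℝ)⁻¹ ≤ ((v:ℝ))⁻¹ + (((p - v : ℕ) : ℝ))⁻¹ := by
    intro v hv
    obtain ⟨h1, h2⟩ := Finset.mem_Icc.mp hv
    have hv0 : (0:ℝ) < v := by exact_mod_cast h1
    have hpv0 : (0:ℝ) < ((p - v : ℕ) : ℝ) := by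
      have : 1 ≤ p - v := by omega
      exact_mod_cast this
    rcases min_choice v (p - v) with h | h <;> rw [h]
    · have := inv_nonneg.mpr hpv0.le
      linarith
    · have := inv_nonneg.mpr hv0.le
      linarith
  calc ∑ v ∈ Finset.Icc 1 (p - 1), ((min v (p - v) : ℕ) : ℝ)⁻¹
      ≤ ∑ v ∈ Finset.Icc 1 (p - 1), (((v:ℝ))⁻¹ + (((p - v : ℕ) : ℝ))⁻¹) :=
        Finset.sum_le_sum step
    _ = ∑ v ∈ Finset.Icc 1 (p - 1), ((v:ℝ))⁻¹ + ∑ v ∈ Finset.Icc 1 (p - 1), (((p - v : ℕ) : ℝ))⁻¹ :=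
        Finset.sum_add_distrib
    _ = 2 * ∑ v ∈ Finset.Icc 1 (p - 1), ((v:ℝ))⁻¹ := by
        rw [sum_reflect p (fun v => ((v:ℝ))⁻¹)]
        ring
    _ ≤ 2 * (1 + Real.log (p - 1 : ℕ)) := by
        have := sum_inv_Icc_le (p - 1)
        linarith
    _ ≤ 2 * (1 + Real.log p) := by
        have : Real.log ((p - 1 : ℕ) : ℝ) ≤ Real.log p := by
          apply Real.log_le_log (by exact_mod_cast Nat.sub_pos_of_lt (by omega) : (0:ℝ) < ((p-1:ℕ):ℝ))
          exact_mod_cast Nat.sub_le p 1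
        linarith

section main
variable {p : ℕ} [Fact p.Prime]

/-- the exponential sum over the coset, in psi form -/
noncomputable def ShS (H : Subgroup (ZMod p)ˣ) (x₀ : (ZMod p)ˣ) (a : ZMod p) : ℂ :=
  ∑ h : H, psi p (a * ((x₀ * (h : (ZMod p)ˣ) : (ZMod p)ˣ) : ZMod p))

lemma hyp_to_psi (C δ : ℝ) (H : Subgroup (ZMod p)ˣ) (x₀ : (ZMod p)ˣ)
    (hyp : ∀ a : (ZMod p)ˣ,
      ‖∑ h : H, e
          ((((a * (h : (ZMod p)ˣ) : (ZMod p)ˣ) : ZMod p).val : ℝ) / p)‖ ≤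
        C * (Nat.card H) / (p : ℝ) ^ (3 * δ)) :
    ∀ a : ZMod p, a ≠ 0 →
      ‖ShS H x₀ a‖ ≤ C * (Nat.card H) / (p : ℝ) ^ (3 * δ) := by
  intro a ha
  obtain ⟨u, hu⟩ := isUnit_iff_ne_zero.mpr ha
  have hS : ShS H x₀ a = ∑ h : H,
      e (((((u * x₀) * (h : (ZMod p)ˣ) : (ZMod p)ˣ) : ZMod p).val : ℝ) / p) := by
    unfold ShS
    apply Finset.sum_congr rfl
    intro h _
    have harg : a * ((x₀ * (h : (ZMod p)ˣ) : (ZMod p)ˣ) : ZMod p)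
        = (((u * x₀) * (h : (ZMod p)ˣ) : (ZMod p)ˣ) : ZMod p) := by
      rw [← hu]
      push_cast [Units.val_mul]
      ring
    rw [harg]
    rfl
  rw [hS]
  exact hyp (u * x₀)

lemma lemA (C δ : ℝ) (hδ : 0 < δ) (H : Subgroup (ZMod p)ˣ) (x₀ : (ZMod p)ˣ)
    (hyp' : ∀ a : ZMod p, a ≠ 0 →
      ‖ShS H x₀ a‖ ≤ C * (Nat.card H) / (p : ℝ) ^ (3 * δ)) :
    (p : ℝ) ^ (3 * δ) ≤ |C| * p := by
  haveI : NeZero p := ⟨(Fact.out : p.Prime).ne_zero⟩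
  have hp2 : 2 ≤ p := (Fact.out : p.Prime).two_le
  have hp1 : 1 < p := hp2
  have hp0R : (0:ℝ) < p := by positivity
  set K : ℕ := Nat.card H with hK
  have hK1 : 1 ≤ K := Nat.card_pos
  have hKle : K ≤ p - 1 := by
    have h1 : K ≤ Nat.card (ZMod p)ˣ := Subgroup.card_le_card_group H
    have h2 : Nat.card (ZMod p)ˣ = p - 1 := by
      rw [Nat.card_eq_fintype_card, ZMod.card_units_eq_totient, Nat.totient_prime Fact.out]
    omega
  set vh : H → ZMod p := fun h => ((x₀ * (h : (ZMod p)ˣ) : (ZMod p)ˣ) : ZMod p) with hvh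
  have hvh_inj : Function.Injective vh := by
    intro h h' hhh
    have : (x₀ * (h : (ZMod p)ˣ) : (ZMod p)ˣ) = (x₀ * (h' : (ZMod p)ˣ) : (ZMod p)ˣ) :=
      Units.ext hhh
    have := mul_left_cancel this
    exact Subtype.ext this
  -- Parseval
  have hpar : ∑ a : ZMod p, ShS H x₀ a * (starRingEnd ℂ) (ShS H x₀ a) = (K : ℂ) * p := by
    have hsq : ∀ a : ZMod p, ShS H x₀ a * (starRingEnd ℂ) (ShS H x₀ a)
        = ∑ h : H, ∑ h' : H, psi p (a * (vh h - vh h')) := by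
      intro a
      rw [ShS, map_sum, Finset.sum_mul_sum]
      apply Finset.sum_congr rfl
      intro h _
      apply Finset.sum_congr rfl
      intro h' _
      rw [psi_conj, ← psi_add]
      congr 1
      rw [hvh]
      ring
    calc ∑ a : ZMod p, ShS H x₀ a * (starRingEnd ℂ) (ShS H x₀ a)
        = ∑ a : ZMod p, ∑ h : H, ∑ h' : H, psi p (a * (vh h - vh h')) :=
          Finset.sum_congr rfl (fun a _ => hsq a)
      _ = ∑ h : H, ∑ a : ZMod p, ∑ h' : H, psi p (a * (vh h - vh h')) := Finset.sum_comm
      _ = ∑ h : H, ∑ h' : H, ∑ a : ZMod p, psi p (a * (vh h - vh h')) :=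
          Finset.sum_congr rfl (fun h _ => Finset.sum_comm)
      _ = ∑ h : H, ∑ h' : H, (if vh h - vh h' = 0 then (p:ℂ) else 0) :=
          Finset.sum_congr rfl (fun h _ => Finset.sum_congr rfl (fun h' _ => psi_sum hp1 _))
      _ = ∑ h : H, ∑ h' : H, (if h = h' then (p:ℂ) else 0) := by
          apply Finset.sum_congr rfl; intro h _; apply Finset.sum_congr rfl; intro h' _
          congr 1
          simp only [sub_eq_zero, eq_iff_iff]
          exact ⟨fun hh => hvh_inj hh, fun hh => by rw [hh]⟩
      _ = ∑ h : H, (p:ℂ) := by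
          apply Finset.sum_congr rfl; intro h _
          rw [Finset.sum_ite_eq (Finset.univ : Finset H) h (fun _ => (p:ℂ))]
          simp
      _ = (K : ℂ) * p := by
          rw [Finset.sum_const, Finset.card_univ, ← Nat.card_eq_fintype_card, ← hK]
          simp [mul_comm]
  have hparR : ∑ a : ZMod p, Complex.normSq (ShS H x₀ a) = (K : ℝ) * p := by
    simp_rw [Complex.mul_conj] at hpar
    exact_mod_cast hpar
  set Q : ℝ := (p : ℝ) ^ (3 * δ) with hQdef
  have hQ : 0 < Q := by positivity
  set B : ℝ := C * K / Q with hB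
  have hB0 : 0 ≤ B := le_trans (norm_nonneg _) (hyp' 1 one_ne_zero)
  have hSh0 : ShS H x₀ 0 = (K : ℂ) := by
    rw [ShS]
    have h0 : ∀ h : H, psi p (0 * ((x₀ * (h : (ZMod p)ˣ) : (ZMod p)ˣ) : ZMod p)) = 1 := by
      intro h; rw [zero_mul]; exact psi_zero
    rw [Finset.sum_congr rfl (fun h _ => h0 h), Finset.sum_const, Finset.card_univ,
      ← Nat.card_eq_fintype_card, ← hK]
    simp
  have hn0 : Complex.normSq (ShS H x₀ 0) = (K:ℝ)^2 := by
    rw [hSh0, show ((K:ℕ):ℂ) = (((K:ℕ):ℝ):ℂ) by push_cast; rfl, Complex.normSq_ofReal]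
    ring
  have hsum_split := Finset.add_sum_erase Finset.univ
    (fun a => Complex.normSq (ShS H x₀ a)) (Finset.mem_univ (0 : ZMod p))
  have hcard_erase : ((Finset.univ.erase (0 : ZMod p)).card : ℝ) ≤ (p:ℝ) := by
    have h1 : (Finset.univ.erase (0 : ZMod p)).card = p - 1 := by
      rw [Finset.card_erase_of_mem (Finset.mem_univ _), Finset.card_univ, ZMod.card]
    rw [h1]
    exact_mod_cast Nat.sub_le p 1
  have htail : ∑ a ∈ Finset.univ.erase (0 : ZMod p), Complex.normSq (ShS H x₀ a)
      ≤ (p : ℝ) * B ^ 2 := by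
    calc ∑ a ∈ Finset.univ.erase (0 : ZMod p), Complex.normSq (ShS H x₀ a)
        ≤ ∑ a ∈ Finset.univ.erase (0 : ZMod p), B ^ 2 := by
          apply Finset.sum_le_sum
          intro a ha
          have h1 := hyp' a (Finset.mem_erase.mp ha).1
          rw [← Complex.sq_norm]
          exact pow_le_pow_left₀ (norm_nonneg _) h1 2
      _ = ((Finset.univ.erase (0 : ZMod p)).card : ℝ) * B ^ 2 := by
          rw [Finset.sum_const, nsmul_eq_mul]
      _ ≤ (p : ℝ) * B ^ 2 :=
          mul_le_mul_of_nonneg_right hcard_erase (sq_nonneg B)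
  have hKR : (1:ℝ) ≤ (K:ℝ) := by exact_mod_cast hK1
  have hKpR : (K:ℝ) ≤ (p:ℝ) - 1 := by
    have h1 : (K:ℝ) ≤ ((p - 1 : ℕ):ℝ) := by exact_mod_cast hKle
    rw [Nat.cast_sub hp1.le] at h1
    simpa using h1
  have hmain : (K:ℝ) * p - (K:ℝ)^2 ≤ (p:ℝ) * B^2 := by
    rw [hn0] at hsum_split
    rw [hparR] at hsum_split
    linarith [htail]
  have h7 : (K:ℝ) ≤ (p:ℝ) * B^2 := by nlinarith [hmain, hKR, hKpR]
  have hBsq : B^2 * Q^2 = C^2 * (K:ℝ)^2 := by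
    rw [hB]
    field_simp
  have hquot : (K:ℝ) * Q^2 ≤ (p:ℝ) * (C^2 * (K:ℝ)^2) := by
    calc (K:ℝ) * Q^2 ≤ ((p:ℝ) * B^2) * Q^2 := mul_le_mul_of_nonneg_right h7 (sq_nonneg Q)
      _ = (p:ℝ) * (B^2 * Q^2) := by ring
      _ = (p:ℝ) * (C^2 * (K:ℝ)^2) := by rw [hBsq]
  have hKpos : (0:ℝ) < (K:ℝ) := lt_of_lt_of_le one_pos hKR
  have h8 : Q^2 ≤ (p:ℝ) * C^2 * (K:ℝ) := by
    by_contra hcon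
    push_neg at hcon
    have hx := mul_lt_mul_of_pos_right hcon hKpos
    nlinarith [hquot]
  have e1 : (p:ℝ) * C^2 * (K:ℝ) ≤ C^2 * (p:ℝ)^2 := by
    nlinarith [mul_nonneg (sub_nonneg.mpr hKpR) (mul_nonneg (sq_nonneg C) hp0R.le),
      mul_nonneg (sq_nonneg C) hp0R.le]
  have h9 : Q^2 ≤ (|C| * p)^2 := by
    rw [mul_pow, sq_abs]
    linarith [h8, e1]
  calc Q = Real.sqrt (Q^2) := (Real.sqrt_sq hQ.le).symm
    _ ≤ Real.sqrt ((|C| * p)^2) := Real.sqrt_le_sqrt h9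
    _ = |C| * p := Real.sqrt_sq (by positivity)

set_option maxHeartbeats 1000000 in
lemma main_count (C δ : ℝ) (hδ : 0 < δ) (H : Subgroup (ZMod p)ˣ) (x₀ : (ZMod p)ˣ)
    (hyp' : ∀ a : ZMod p, a ≠ 0 →
      ‖ShS H x₀ a‖ ≤ C * (Nat.card H) / (p : ℝ) ^ (3 * δ)) :
    ((Nat.card {q : H × ℤ | 1 ≤ |q.2| ∧
        (q.2 : ℝ) ≤ (⌊(p : ℝ) ^ (1 - δ)⌋₊ : ℝ) ∧ -(⌊(p : ℝ) ^ (1 - δ)⌋₊ : ℝ) ≤ (q.2 : ℝ) ∧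
        ((x₀ * (q.1 : (ZMod p)ˣ) : (ZMod p)ˣ) : ZMod p) = ((q.2 : ℤ) : ZMod p)} : ℝ) ≥
      2 * (Nat.card H) / (p : ℝ) ^ δ -
        (9 * |C| + 1) * (Nat.card H) * Real.log p / (p : ℝ) ^ (3 * δ)) := by
  haveI : NeZero p := ⟨(Fact.out : p.Prime).ne_zero⟩
  have hp2 : 2 ≤ p := (Fact.out : p.Prime).two_le
  have hp1 : 1 < p := hp2
  have hp0R : (0:ℝ) < p := by positivity
  have hp2R : (2:ℝ) ≤ p := by exact_mod_cast hp2
  set N : ℕ := ⌊(p : ℝ) ^ (1 - δ)⌋₊ with hN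
  set X : Finset ℤ := (Finset.Icc (-(N:ℤ)) (N:ℤ)).erase 0 with hX
  set S : Finset (H × ℤ) := Finset.filter
    (fun q : H × ℤ => ((x₀ * (q.1 : (ZMod p)ˣ) : (ZMod p)ˣ) : ZMod p) = ((q.2 : ℤ) : ZMod p))
    (Finset.univ ×ˢ X) with hS
  have hsetEq : {q : H × ℤ | 1 ≤ |q.2| ∧
        (q.2 : ℝ) ≤ ((N:ℕ) : ℝ) ∧ -((N:ℕ) : ℝ) ≤ (q.2 : ℝ) ∧
        ((x₀ * (q.1 : (ZMod p)ˣ) : (ZMod p)ˣ) : ZMod p) = ((q.2 : ℤ) : ZMod p)} = ↑S := by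
    ext q
    simp only [Set.mem_setOf_eq, hS, Finset.coe_filter, Finset.mem_coe, Finset.mem_filter,
      Finset.mem_product, Finset.mem_univ, true_and, hX, Finset.mem_erase, Finset.mem_Icc]
    constructor
    · rintro ⟨h1, h2, h3, h4⟩
      have h2' : q.2 ≤ (N:ℤ) := by exact_mod_cast h2
      have h3' : -(N:ℤ) ≤ q.2 := by exact_mod_cast h3
      have hne : q.2 ≠ 0 := by
        intro h0
        rw [h0] at h1
        norm_num at h1
      exact ⟨⟨hne, h3', h2'⟩, h4⟩
    · rintro ⟨⟨h0, h3, h2⟩, h4⟩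
      refine ⟨Int.one_le_abs ?_, by exact_mod_cast h2, by exact_mod_cast h3, h4⟩
      omega
  have hcount : (Nat.card {q : H × ℤ | 1 ≤ |q.2| ∧
        (q.2 : ℝ) ≤ ((N:ℕ) : ℝ) ∧ -((N:ℕ) : ℝ) ≤ (q.2 : ℝ) ∧
        ((x₀ * (q.1 : (ZMod p)ˣ) : (ZMod p)ˣ) : ZMod p) = ((q.2 : ℤ) : ZMod p)}) = S.card := by
    rw [hsetEq, Nat.card_coe_set_eq, Set.ncard_coe_finset]
  rw [hcount]
  -- abbreviations
  set K : ℕ := Nat.card H with hK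
  have hK1 : 1 ≤ K := Nat.card_pos
  have hKR : (1:ℝ) ≤ (K:ℝ) := by exact_mod_cast hK1
  have hKpos : (0:ℝ) < (K:ℝ) := lt_of_lt_of_le one_pos hKR
  set Q : ℝ := (p : ℝ) ^ (3 * δ) with hQdef
  have hQ : 0 < Q := by positivity
  have hB0 : 0 ≤ C * K / Q := le_trans (norm_nonneg _) (hyp' 1 one_ne_zero)
  have hC0 : 0 ≤ C := by
    by_contra hcon
    push_neg at hcon
    have : C * K / Q < 0 := div_neg_of_neg_of_pos (mul_neg_of_neg_of_pos hcon hKpos) hQ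
    linarith
  set T : ZMod p → ℂ := fun a => ∑ x ∈ X, psi p ((-a) * ((x : ℤ) : ZMod p)) with hT
  -- the Fourier identity
  have h1 : ((S.card : ℕ) : ℂ) = ∑ q ∈ ((Finset.univ : Finset H) ×ˢ X),
      (if ((x₀ * (q.1 : (ZMod p)ˣ) : (ZMod p)ˣ) : ZMod p) = ((q.2 : ℤ) : ZMod p)
        then (1:ℂ) else 0) := by
    rw [hS, Finset.card_filter, Nat.cast_sum]
    simp only [Nat.cast_ite, Nat.cast_one, Nat.cast_zero]
  have hid : ((p * S.card : ℕ) : ℂ) = ∑ a : ZMod p, ShS H x₀ a * T a := by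
    calc ((p * S.card : ℕ) : ℂ) = (p:ℂ) * ((S.card : ℕ) : ℂ) := by push_cast; ring
      _ = ∑ q ∈ ((Finset.univ : Finset H) ×ˢ X),
          (if ((x₀ * (q.1 : (ZMod p)ˣ) : (ZMod p)ˣ) : ZMod p) = ((q.2 : ℤ) : ZMod p)
            then (p:ℂ) else 0) := by
          rw [h1, Finset.mul_sum]
          simp only [mul_ite, mul_one, mul_zero]
      _ = ∑ q ∈ ((Finset.univ : Finset H) ×ˢ X), ∑ a : ZMod p,
          psi p (a * (((x₀ * (q.1 : (ZMod p)ˣ) : (ZMod p)ˣ) : ZMod p) - ((q.2 : ℤ) : ZMod p))) := by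
          refine Finset.sum_congr rfl fun q _ => ?_
          rw [psi_sum hp1]
          simp only [sub_eq_zero]
      _ = ∑ a : ZMod p, ∑ q ∈ ((Finset.univ : Finset H) ×ˢ X),
          psi p (a * (((x₀ * (q.1 : (ZMod p)ˣ) : (ZMod p)ˣ) : ZMod p) - ((q.2 : ℤ) : ZMod p))) :=
          Finset.sum_comm
      _ = ∑ a : ZMod p, ShS H x₀ a * T a := by
          refine Finset.sum_congr rfl fun a _ => ?_
          rw [ShS, hT, Finset.sum_mul_sum, Finset.sum_product]
          apply Finset.sum_congr rfl
          intro h _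
          apply Finset.sum_congr rfl
          intro x _
          rw [← psi_add]
          congr 1
          ring
  have hSh0 : ShS H x₀ 0 = (K : ℂ) := by
    rw [ShS]
    have h0 : ∀ h : H, psi p (0 * ((x₀ * (h : (ZMod p)ˣ) : (ZMod p)ˣ) : ZMod p)) = 1 := by
      intro h; rw [zero_mul]; exact psi_zero
    rw [Finset.sum_congr rfl (fun h _ => h0 h), Finset.sum_const, Finset.card_univ,
      ← Nat.card_eq_fintype_card, ← hK]
    simp
  have hXcard : X.card = 2 * N := by
    rw [hX, Finset.card_erase_of_mem (by simp), Int.card_Icc]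
    rw [show (N:ℤ) + 1 - -(N:ℤ) = 2*(N:ℤ)+1 by ring]
    omega
  have hT0 : T 0 = ((2 * N : ℕ) : ℂ) := by
    rw [hT]
    simp only [neg_zero, zero_mul, psi_zero, Finset.sum_const, nsmul_eq_mul, mul_one]
    rw [hXcard]
  have hsplit : ∑ a : ZMod p, ShS H x₀ a * T a
      = ((2 * N * K : ℕ) : ℂ) + ∑ a ∈ Finset.univ.erase (0 : ZMod p), ShS H x₀ a * T a := by
    rw [← Finset.add_sum_erase Finset.univ _ (Finset.mem_univ (0 : ZMod p)), hSh0, hT0]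
    push_cast
    ring_nf
  have hreal : ((p:ℝ) * (S.card:ℝ)) = 2*(N:ℝ)*(K:ℝ)
      + (∑ a ∈ Finset.univ.erase (0 : ZMod p), ShS H x₀ a * T a).re := by
    have h := congrArg Complex.re (hid.trans hsplit)
    simp only [Complex.natCast_re, Complex.add_re] at h
    push_cast at h ⊢
    linarith
  -- bounding T
  have hXsplit : X = Finset.Icc (-(N:ℤ)) (-1) ∪ Finset.Icc 1 (N:ℤ) := by
    ext x
    simp only [hX, Finset.mem_erase, Finset.mem_Icc, Finset.mem_union]
    omega
  have hXdisj : Disjoint (Finset.Icc (-(N:ℤ)) (-1)) (Finset.Icc 1 (N:ℤ)) := by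
    rw [Finset.disjoint_left]
    intro x hx hx'
    simp only [Finset.mem_Icc] at hx hx'
    omega
  have hposSum : ∀ b : ZMod p, ∑ x ∈ Finset.Icc (1:ℤ) (N:ℤ), psi p (b * ((x : ℤ) : ZMod p))
      = ∑ k ∈ Finset.Icc (1:ℕ) N, (psi p b)^k := by
    intro b
    apply Finset.sum_nbij' (i := fun x : ℤ => x.toNat) (j := fun k => (k:ℤ))
    · intro x hx; simp only [Finset.mem_Icc] at *; omega
    · intro k hk; simp only [Finset.mem_Icc] at *; omega
    · intro x hx; simp only [Finset.mem_Icc] at hx; omega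
    · intro k _; omega
    · intro x hx
      simp only [Finset.mem_Icc] at hx
      have hc : ((x : ℤ) : ZMod p) = ((x.toNat : ℕ) : ZMod p) := by
        rw [show ((x.toNat : ℕ) : ZMod p) = ((x.toNat : ℤ) : ZMod p) by push_cast; rfl,
          Int.toNat_of_nonneg (by omega)]
      rw [hc, psi_mul_natCast]
  have hnegSum : ∀ b : ZMod p, ∑ x ∈ Finset.Icc (-(N:ℤ)) (-1), psi p (b * ((x : ℤ) : ZMod p))
      = ∑ k ∈ Finset.Icc (1:ℕ) N, (psi p (-b))^k := by
    intro b
    apply Finset.sum_nbij' (i := fun x : ℤ => (-x).toNat) (j := fun k => -(k:ℤ))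
    · intro x hx; simp only [Finset.mem_Icc] at *; omega
    · intro k hk; simp only [Finset.mem_Icc] at *; omega
    · intro x hx; simp only [Finset.mem_Icc] at hx; omega
    · intro k _; omega
    · intro x hx
      simp only [Finset.mem_Icc] at hx
      have hc : ((x : ℤ) : ZMod p) = -(((-x).toNat : ℕ) : ZMod p) := by
        rw [show (((-x).toNat : ℕ) : ZMod p) = (((-x).toNat : ℤ) : ZMod p) by push_cast; rfl,
          Int.toNat_of_nonneg (by omega)]
        push_cast
        ring
      rw [hc, show b * -(((-x).toNat : ℕ) : ZMod p) = (-b) * (((-x).toNat : ℕ) : ZMod p) by ring,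
        psi_mul_natCast]
  have habs_eq : ∀ b : ZMod p, ‖psi p (-b) - 1‖ = ‖psi p b - 1‖ := by
    intro b
    calc ‖psi p (-b) - 1‖
        = ‖(starRingEnd ℂ) (psi p b - 1)‖ := by
          congr 1
          rw [map_sub, psi_conj, map_one]
      _ = ‖psi p b - 1‖ := Complex.norm_conj _
  have hTbound : ∀ a : ZMod p, a ≠ 0 →
      ‖T a‖ ≤ (p:ℝ) * ((min a.val (p - a.val) : ℕ):ℝ)⁻¹ := by
    intro a ha
    have hval1 : 0 < a.val := Nat.pos_of_ne_zero (fun h' => ha ((ZMod.val_eq_zero a).mp h'))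
    have hval2 : a.val < p := ZMod.val_lt a
    have hmin1 : 0 < min a.val (p - a.val) := by omega
    have hminR : (0:ℝ) < ((min a.val (p - a.val) : ℕ):ℝ) := by exact_mod_cast hmin1
    have hlow : 4 * ((min a.val (p - a.val) : ℕ) : ℝ) / p ≤ ‖psi p a - 1‖ :=
      abs_e_sub_one_ge hval1 hval2
    have hlow0 : 0 < 4 * ((min a.val (p - a.val) : ℕ) : ℝ) / p := by positivity
    have hb : (-a) ≠ 0 := neg_ne_zero.mpr ha
    have habs1 : ‖psi p (-a) - 1‖ = ‖psi p a - 1‖ := habs_eq a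
    have hTa : T a = (∑ k ∈ Finset.Icc (1:ℕ) N, (psi p a)^k)
        + ∑ k ∈ Finset.Icc (1:ℕ) N, (psi p (-a))^k := by
      rw [hT]
      simp only
      rw [hXsplit, Finset.sum_union hXdisj, hnegSum (-a), hposSum (-a), neg_neg]
    have hg1 : ‖∑ k ∈ Finset.Icc (1:ℕ) N, (psi p a)^k‖
        ≤ 2 / ‖psi p a - 1‖ := geom_abs (psi_abs a) (psi_ne_one hp1 ha) N
    have hg2 : ‖∑ k ∈ Finset.Icc (1:ℕ) N, (psi p (-a))^k‖
        ≤ 2 / ‖psi p a - 1‖ := by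
      rw [← habs1]
      exact geom_abs (psi_abs (-a)) (psi_ne_one hp1 hb) N
    have habsT : ‖T a‖ ≤ 4 / ‖psi p a - 1‖ := by
      rw [hTa]
      calc ‖_ + _‖ ≤ _ + _ := norm_add_le _ _
        _ ≤ 2 / ‖psi p a - 1‖ + 2 / ‖psi p a - 1‖ :=
            add_le_add hg1 hg2
        _ = 4 / ‖psi p a - 1‖ := by ring
    calc ‖T a‖ ≤ 4 / ‖psi p a - 1‖ := habsT
      _ ≤ 4 / (4 * ((min a.val (p - a.val) : ℕ) : ℝ) / p) :=
          div_le_div_of_nonneg_left (by norm_num) hlow0 hlow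
      _ = (p:ℝ) * ((min a.val (p - a.val) : ℕ):ℝ)⁻¹ := by
          rw [div_div_eq_mul_div, mul_div_mul_left _ _ (by norm_num : (4:ℝ) ≠ 0),
            div_eq_mul_inv]
  have hTsum : ∑ a ∈ Finset.univ.erase (0 : ZMod p), ‖T a‖
      ≤ (p:ℝ) * (2 * (1 + Real.log p)) := by
    calc ∑ a ∈ Finset.univ.erase (0 : ZMod p), ‖T a‖
        ≤ ∑ a ∈ Finset.univ.erase (0 : ZMod p),
            (p:ℝ) * ((min a.val (p - a.val) : ℕ):ℝ)⁻¹ :=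
          Finset.sum_le_sum (fun a ha => hTbound a (Finset.mem_erase.mp ha).1)
      _ = ∑ v ∈ Finset.Icc 1 (p - 1), (p:ℝ) * ((min v (p - v) : ℕ):ℝ)⁻¹ :=
          sum_val_reindex' (f := fun v => (p:ℝ) * ((min v (p - v) : ℕ):ℝ)⁻¹)
      _ = (p:ℝ) * ∑ v ∈ Finset.Icc 1 (p - 1), ((min v (p - v) : ℕ):ℝ)⁻¹ := by
          rw [Finset.mul_sum]
      _ ≤ (p:ℝ) * (2 * (1 + Real.log p)) :=
          mul_le_mul_of_nonneg_left (sum_inv_min_le hp2) hp0R.le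
  have herr : ‖∑ a ∈ Finset.univ.erase (0 : ZMod p), ShS H x₀ a * T a‖
      ≤ (C * K / Q) * ((p:ℝ) * (2 * (1 + Real.log p))) := by
    calc ‖∑ a ∈ Finset.univ.erase (0 : ZMod p), ShS H x₀ a * T a‖
        ≤ ∑ a ∈ Finset.univ.erase (0 : ZMod p), ‖ShS H x₀ a * T a‖ :=
          norm_sum_le _ _
      _ ≤ ∑ a ∈ Finset.univ.erase (0 : ZMod p), (C * K / Q) * ‖T a‖ := by
          apply Finset.sum_le_sum
          intro a ha
          rw [norm_mul]
          exact mul_le_mul_of_nonneg_right (hyp' a (Finset.mem_erase.mp ha).1)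
            (norm_nonneg _)
      _ = (C * K / Q) * ∑ a ∈ Finset.univ.erase (0 : ZMod p), ‖T a‖ := by
          rw [Finset.mul_sum]
      _ ≤ (C * K / Q) * ((p:ℝ) * (2 * (1 + Real.log p))) :=
          mul_le_mul_of_nonneg_left hTsum hB0
  -- putting it together
  set L : ℝ := Real.log p with hL
  have hge1 : (p:ℝ) * (S.card:ℝ) ≥ 2*(N:ℝ)*(K:ℝ) - (C * K / Q) * ((p:ℝ) * (2 * (1 + L))) := by
    have h2 := Complex.abs_re_le_norm (∑ a ∈ Finset.univ.erase (0 : ZMod p), ShS H x₀ a * T a)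
    have h3 := neg_abs_le ((∑ a ∈ Finset.univ.erase (0 : ZMod p), ShS H x₀ a * T a).re)
    linarith [hreal, herr]
  have hA : Q ≤ |C| * p := lemA C δ hδ H x₀ hyp'
  have hLlow : (0.69:ℝ) < L := by
    have h1 : Real.log 2 ≤ L := Real.log_le_log two_pos hp2R
    linarith [Real.log_two_gt_d9]
  have hNlow : (p:ℝ) ^ (1 - δ) - 1 ≤ (N:ℝ) := by
    have := Nat.lt_floor_add_one ((p : ℝ) ^ (1 - δ))
    rw [← hN] at this
    linarith
  have hpd : (0:ℝ) < (p:ℝ) ^ δ := by positivity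
  have hpow : (p:ℝ) ^ (1 - δ) = (p:ℝ) / (p:ℝ) ^ δ := by
    rw [eq_div_iff (ne_of_gt hpd), ← Real.rpow_add hp0R]
    norm_num
  have habsC : |C| = C := abs_of_nonneg hC0
  have step1 : (p:ℝ) * (S.card:ℝ)
      ≥ 2*((p:ℝ) / (p:ℝ)^δ - 1)*(K:ℝ) - (C * K / Q) * ((p:ℝ) * (2 * (1 + L))) := by
    have hNK : 2*((p:ℝ) / (p:ℝ)^δ - 1)*(K:ℝ) ≤ 2*(N:ℝ)*(K:ℝ) := by
      have h5 : (p:ℝ) / (p:ℝ)^δ - 1 ≤ (N:ℝ) := by rw [← hpow]; exact hNlow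
      nlinarith [hKpos]
    linarith [hge1]
  have step2 : (S.card:ℝ)
      ≥ (2*((p:ℝ) / (p:ℝ)^δ - 1)*(K:ℝ) - (C * K / Q) * ((p:ℝ) * (2 * (1 + L)))) / p := by
    rw [ge_iff_le, div_le_iff₀ hp0R]
    linarith [step1]
  have step3 : (2*((p:ℝ) / (p:ℝ)^δ - 1)*(K:ℝ) - (C * K / Q) * ((p:ℝ) * (2 * (1 + L)))) / p
      = 2*(K:ℝ)/(p:ℝ)^δ - 2*(K:ℝ)/(p:ℝ) - 2*C*(K:ℝ)*(1+L)/Q := by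
    field_simp
  have step4 : 2*(K:ℝ)/(p:ℝ) ≤ 3* |C| *(K:ℝ)*L/Q := by
    rw [div_le_div_iff₀ hp0R hQ]
    have hAK := mul_le_mul_of_nonneg_left hA (by positivity : (0:ℝ) ≤ 2*(K:ℝ))
    nlinarith [mul_nonneg (mul_nonneg (mul_nonneg (by linarith : (0:ℝ) ≤ 3*L-2) (abs_nonneg C))
      hKpos.le) hp0R.le]
  have step5 : 2*C*(K:ℝ)*(1+L)/Q ≤ 6* |C| *(K:ℝ)*L/Q := by
    rw [div_le_div_iff₀ hQ hQ, habsC]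
    nlinarith [mul_nonneg (mul_nonneg (mul_nonneg hC0 hKpos.le)
      (by linarith : (0:ℝ) ≤ 4*L-2)) hQ.le]
  have hWnn : (0:ℝ) ≤ (K:ℝ)*L/Q := by positivity
  have hfin : 2*(K:ℝ)/(p:ℝ)^δ - (9 * |C| + 1)*(K:ℝ)*L/Q ≤ (S.card:ℝ) := by
    have e1 : (9 * |C| + 1)*(K:ℝ)*L/Q = 3* |C| *(K:ℝ)*L/Q + 6* |C| *(K:ℝ)*L/Q + (K:ℝ)*L/Q := by
      ring
    linarith [step2, step3 ▸ step2, step4, step5, hWnn]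
  exact hfin

end main

theorem stmt_11 (C : ℝ) :
    ∃ C' : ℝ, 0 < C' ∧ ∃ P₀ : ℝ → ℕ,
      ∀ (p : ℕ) [Fact p.Prime], ∀ (δ : ℝ), 0 < δ →
        ∀ (H : Subgroup (ZMod p)ˣ) (x₀ : (ZMod p)ˣ),
          (∀ a : (ZMod p)ˣ,
              ‖∑ h : H, e
                  ((((a * (h : (ZMod p)ˣ) : (ZMod p)ˣ) : ZMod p).val : ℝ) / p)‖ ≤
                C * (Nat.card H) / (p : ℝ) ^ (3 * δ)) →
          ((Nat.card {q : H × ℤ | 1 ≤ |q.2| ∧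
                (q.2 : ℝ) ≤ (⌊(p : ℝ) ^ (1 - δ)⌋₊ : ℝ) ∧ -(⌊(p : ℝ) ^ (1 - δ)⌋₊ : ℝ) ≤ (q.2 : ℝ) ∧
                ((x₀ * (q.1 : (ZMod p)ˣ) : (ZMod p)ˣ) : ZMod p) = ((q.2 : ℤ) : ZMod p)} : ℝ) ≥
              2 * (Nat.card H) / (p : ℝ) ^ δ -
                C' * (Nat.card H) * Real.log p / (p : ℝ) ^ (3 * δ)) ∧
          (1 ≤ Nat.card H → P₀ δ ≤ p →
            ∃ (h : (ZMod p)ˣ) (x : ℤ), h ∈ H ∧ 1 ≤ |x| ∧ (|x| : ℝ) ≤ (p : ℝ) ^ (1 - δ) ∧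
              ((x₀ * h : (ZMod p)ˣ) : ZMod p) = ((x : ℤ) : ZMod p)) := by
  have hPex : ∀ δ : ℝ, ∃ n : ℕ, 0 < δ → ∀ p : ℕ, n ≤ p → 2 ≤ p →
      (9 * |C| + 1) * Real.log p < 2 * (p:ℝ) ^ (2*δ) := by
    intro δ
    by_cases hδ : 0 < δ
    · have hlo := isLittleO_log_rpow_atTop (by linarith : (0:ℝ) < 2*δ)
      have hc : (0:ℝ) < 1 / (9 * |C| + 1) := by positivity
      have hev := hlo.def hc
      rw [Filter.eventually_atTop] at hev
      obtain ⟨M, hM⟩ := hev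
      refine ⟨⌈M⌉₊, fun _ p hp hp2 => ?_⟩
      have hpM : M ≤ (p:ℝ) := le_trans (Nat.le_ceil M) (by exact_mod_cast hp)
      have h1 := hM (p:ℝ) hpM
      have hp0 : (0:ℝ) < p := by
        have : 0 < p := by omega
        exact_mod_cast this
      have hlogp : 0 ≤ Real.log p := Real.log_nonneg (by exact_mod_cast Nat.one_le_of_lt hp2)
      have hrp : (0:ℝ) < (p:ℝ)^(2*δ) := Real.rpow_pos_of_pos hp0 _
      rw [Real.norm_eq_abs, Real.norm_eq_abs, abs_of_nonneg hlogp, abs_of_nonneg hrp.le] at h1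
      have hCpos : (0:ℝ) < 9 * |C| + 1 := by positivity
      calc (9 * |C| + 1) * Real.log p
          ≤ (9 * |C| + 1) * ((1/(9 * |C| + 1)) * (p:ℝ)^(2*δ)) :=
            mul_le_mul_of_nonneg_left h1 hCpos.le
        _ = (p:ℝ)^(2*δ) := by field_simp
        _ < 2 * (p:ℝ)^(2*δ) := by linarith
    · exact ⟨0, fun h => absurd h hδ⟩
  choose P₀ hP₀ using hPex
  refine ⟨9 * |C| + 1, by positivity, P₀, ?_⟩
  intro p hFp δ hδ H x₀ hyp
  have hyp' := hyp_to_psi C δ H x₀ hyp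
  have hfirst := main_count C δ hδ H x₀ hyp'
  refine ⟨hfirst, ?_⟩
  intro hH1 hPp
  have hp2 : 2 ≤ p := (Fact.out : p.Prime).two_le
  have hlog := hP₀ δ hδ p hPp hp2
  have hp0 : (0:ℝ) < p := by
    have : 0 < p := by omega
    exact_mod_cast this
  have hK1 : (1:ℝ) ≤ (Nat.card H : ℝ) := by exact_mod_cast hH1
  have hδp : (0:ℝ) < (p:ℝ)^δ := Real.rpow_pos_of_pos hp0 _
  have h2δ : (0:ℝ) < (p:ℝ)^(2*δ) := Real.rpow_pos_of_pos hp0 _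
  have hsplitpow : (p:ℝ)^(3*δ) = (p:ℝ)^δ * (p:ℝ)^(2*δ) := by
    rw [← Real.rpow_add hp0]
    ring_nf
  have hpos : 0 < 2 * (Nat.card H : ℝ) / (p : ℝ) ^ δ -
      (9 * |C| + 1) * (Nat.card H : ℝ) * Real.log p / (p : ℝ) ^ (3 * δ) := by
    have hrw : 2 * (Nat.card H : ℝ) / (p : ℝ) ^ δ -
        (9 * |C| + 1) * (Nat.card H : ℝ) * Real.log p / (p : ℝ) ^ (3 * δ)
        = (Nat.card H : ℝ) * (2 * (p:ℝ)^(2*δ) - (9 * |C| + 1) * Real.log p)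
          / ((p:ℝ)^δ * (p:ℝ)^(2*δ)) := by
      rw [hsplitpow]
      field_simp
    rw [hrw]
    apply div_pos
    · apply mul_pos (by linarith)
      linarith
    · exact mul_pos hδp h2δ
  have hcount_pos : (0:ℝ) < (Nat.card {q : H × ℤ | 1 ≤ |q.2| ∧
      (q.2 : ℝ) ≤ (⌊(p : ℝ) ^ (1 - δ)⌋₊ : ℝ) ∧ -(⌊(p : ℝ) ^ (1 - δ)⌋₊ : ℝ) ≤ (q.2 : ℝ) ∧
      ((x₀ * (q.1 : (ZMod p)ˣ) : (ZMod p)ˣ) : ZMod p) = ((q.2 : ℤ) : ZMod p)} : ℝ) :=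
    lt_of_lt_of_le hpos hfirst
  have hne : Nonempty {q : H × ℤ | 1 ≤ |q.2| ∧
      (q.2 : ℝ) ≤ (⌊(p : ℝ) ^ (1 - δ)⌋₊ : ℝ) ∧ -(⌊(p : ℝ) ^ (1 - δ)⌋₊ : ℝ) ≤ (q.2 : ℝ) ∧
      ((x₀ * (q.1 : (ZMod p)ˣ) : (ZMod p)ˣ) : ZMod p) = ((q.2 : ℤ) : ZMod p)} := by
    have hn0 : Nat.card {q : H × ℤ | 1 ≤ |q.2| ∧
        (q.2 : ℝ) ≤ (⌊(p : ℝ) ^ (1 - δ)⌋₊ : ℝ) ∧ -(⌊(p : ℝ) ^ (1 - δ)⌋₊ : ℝ) ≤ (q.2 : ℝ) ∧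
        ((x₀ * (q.1 : (ZMod p)ˣ) : (ZMod p)ˣ) : ZMod p) = ((q.2 : ℤ) : ZMod p)} ≠ 0 := by
      intro h0
      rw [h0] at hcount_pos
      norm_num at hcount_pos
    exact (Nat.card_ne_zero.mp hn0).1
  obtain ⟨⟨⟨h, x⟩, hq⟩⟩ := hne
  obtain ⟨hq1, hq2, hq3, hq4⟩ := hq
  refine ⟨(h : (ZMod p)ˣ), x, h.2, hq1, ?_, hq4⟩
  have hNle : ((⌊(p:ℝ)^(1-δ)⌋₊ : ℕ) : ℝ) ≤ (p:ℝ)^(1-δ) := Nat.floor_le (by positivity)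
  have h5 : |(x:ℝ)| ≤ ((⌊(p:ℝ)^(1-δ)⌋₊ : ℕ) : ℝ) := abs_le.mpr ⟨hq3, hq2⟩
  linarith
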